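/- arXiv:2507.15848 — 6 statements merged into one kernel-verified Lean document; each statement's English description precedes it below -/
import Mathlib

section
/- For a nonnegative ℓ² sequence (σ_k) and α > 0, the quantity ∑_k min(σ_k, α)² equals the minimum over all sequences (τ_k) with finite support of ∑_k (σ_k − τ_k)² + α² · |{k : τ_k ≠ 0}|, and the minimum is attained by τ_k = σ_k · 1_{σ_k > α} (hard thresholding). -/
private lemma sq_sub_summable (σ τ : ℕ → ℝ) (hsum : Summable (fun k => σ k ^ 2))
    (hτ : (Function.support τ).Finite) : Summable (fun k => (σ k - τ k) ^ 2) := by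
  have h1 : Summable (fun k => (σ k - τ k) ^ 2 - σ k ^ 2) := by
    apply summable_of_ne_finset_zero (s := hτ.toFinset)
    intro b hb
    have : τ b = 0 := by
      by_contra h
      exact hb (hτ.mem_toFinset.mpr h)
    simp [this]
  have := h1.add hsum
  exact this.congr (fun k => by ring)

private lemma ind_summable (τ : ℕ → ℝ) (α : ℝ) (hτ : (Function.support τ).Finite) :
    Summable (fun k => if τ k ≠ 0 then α ^ 2 else 0) := by
  apply summable_of_ne_finset_zero (s := hτ.toFinset)
  intro b hb
  have : τ b = 0 := by
    by_contra h
    exact hb (hτ.mem_toFinset.mpr h)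
  simp [this]

private lemma ind_tsum (τ : ℕ → ℝ) (α : ℝ) (hτ : (Function.support τ).Finite) :
    (∑' k, if τ k ≠ 0 then α ^ 2 else 0) = α ^ 2 * (Function.support τ).ncard := by
  rw [tsum_eq_sum (s := hτ.toFinset)
    (by intro b hb
        have : τ b = 0 := by
          by_contra h
          exact hb (hτ.mem_toFinset.mpr h)
        simp [this])]
  have hc : ∀ b ∈ hτ.toFinset, (if τ b ≠ 0 then α ^ 2 else 0) = α ^ 2 := fun b hb => by
    exact if_pos (hτ.mem_toFinset.mp hb)
  rw [Finset.sum_congr rfl hc, Finset.sum_const, Set.ncard_eq_toFinset_card _ hτ,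
    nsmul_eq_mul, mul_comm]

/-- Variational characterization of soft thresholding (sequence version):
`∑ₖ min(σ k, α)²` is the least value of `∑ₖ (σ k − τ k)² + α² · #{k : τ k ≠ 0}`
over finitely supported sequences `τ`, and hard thresholding attains the minimum. -/
theorem stmt_1 (σ : ℕ → ℝ) (hpos : ∀ k, 0 ≤ σ k)
    (hsum : Summable (fun k => σ k ^ 2)) (α : ℝ) (hα : 0 < α) :
    IsLeast
      {x : ℝ | ∃ τ : ℕ → ℝ, (Function.support τ).Finite ∧
        x = (∑' k, (σ k - τ k) ^ 2) + α ^ 2 * (Function.support τ).ncard}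
      (∑' k, min (σ k) α ^ 2) ∧
    ((∑' k, (σ k - (if α < σ k then σ k else 0)) ^ 2) +
        α ^ 2 * (Function.support fun k => if α < σ k then σ k else 0).ncard
      = ∑' k, min (σ k) α ^ 2) := by
  set τs : ℕ → ℝ := fun k => if α < σ k then σ k else 0 with hτs
  -- support of τs is {k | α < σ k}
  have hsupp : Function.support τs = {k | α < σ k} := by
    ext k
    simp only [Function.mem_support, hτs, Set.mem_setOf_eq]
    constructor
    · intro h
      by_contra hk
      simp [hk] at h
    · intro h
      simp [h]
      exact ne_of_gt (lt_trans hα h)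
  -- finiteness of support of τs
  have hfin : (Function.support τs).Finite := by
    rw [hsupp]
    have h0 : Filter.Tendsto (fun k => σ k ^ 2) Filter.cofinite (nhds 0) :=
      hsum.tendsto_cofinite_zero
    have hev : ∀ᶠ k in Filter.cofinite, σ k ^ 2 < α ^ 2 :=
      h0.eventually (Filter.Tendsto.eventually_lt_const (by positivity) Filter.tendsto_id)
    rw [Filter.eventually_cofinite] at hev
    apply hev.subset
    intro k hk
    simp only [Set.mem_setOf_eq, not_lt] at hk ⊢
    exact pow_le_pow_left₀ hα.le hk.le 2
  have hmin_summable : Summable (fun k => min (σ k) α ^ 2) :=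
    Summable.of_nonneg_of_le (fun k => sq_nonneg _)
      (fun k => pow_le_pow_left₀ (le_min (hpos k) hα.le) (min_le_left _ _) 2) hsum
  -- pointwise identity for hard thresholding
  have hpt : ∀ k, min (σ k) α ^ 2 = (σ k - τs k) ^ 2 + (if τs k ≠ 0 then α ^ 2 else 0) := by
    intro k
    by_cases h : α < σ k
    · have hne : τs k ≠ 0 := by
        simp [hτs, h]
        exact ne_of_gt (lt_trans hα h)
      have hσ : σ k ≠ 0 := ne_of_gt (hα.trans h)
      simp [hτs, h, hσ, min_eq_right h.le]
    · have h0 : τs k = 0 := by simp [hτs, h]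
      simp [h0, min_eq_left (not_lt.mp h)]
  have heq : (∑' k, (σ k - τs k) ^ 2) + α ^ 2 * (Function.support τs).ncard
      = ∑' k, min (σ k) α ^ 2 := by
    rw [tsum_congr hpt, Summable.tsum_add (sq_sub_summable σ τs hsum hfin) (ind_summable τs α hfin),
      ind_tsum τs α hfin]
  constructor
  · constructor
    · exact ⟨τs, hfin, heq.symm⟩
    · rintro x ⟨τ, hτ, rfl⟩
      have hptle : ∀ k, min (σ k) α ^ 2 ≤ (σ k - τ k) ^ 2 + (if τ k ≠ 0 then α ^ 2 else 0) := by
        intro k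
        by_cases h : τ k = 0
        · simp [h]
          exact pow_le_pow_left₀ (le_min (hpos k) hα.le) (min_le_left _ _) 2
        · simp [h]
          calc min (σ k) α ^ 2 ≤ α ^ 2 :=
                pow_le_pow_left₀ (le_min (hpos k) hα.le) (min_le_right _ _) 2
            _ ≤ (σ k - τ k) ^ 2 + α ^ 2 := le_add_of_nonneg_left (sq_nonneg _)
      calc (∑' k, min (σ k) α ^ 2)
          ≤ ∑' k, ((σ k - τ k) ^ 2 + (if τ k ≠ 0 then α ^ 2 else 0)) :=
            Summable.tsum_le_tsum hptle hmin_summable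
              ((sq_sub_summable σ τ hsum hτ).add (ind_summable τ α hτ))
        _ = (∑' k, (σ k - τ k) ^ 2) + α ^ 2 * (Function.support τ).ncard := by
            rw [Summable.tsum_add (sq_sub_summable σ τ hsum hτ) (ind_summable τ α hτ),
              ind_tsum τ α hτ]
  · exact heq
end

section
/- Let v be a nonzero finite-rank element of a Hilbert tensor product with singular values σ_1 ≥ σ_2 ≥ … ≥ σ_r > 0 (r = rank(v)), and let 0 < δ < ‖v‖. Define r_δ = min{ s ∈ ℕ : ∑_{k > s} σ_k² ≤ δ² }. Then r_δ ≤ 1 + ((‖v‖² − δ²)/‖v‖²) · r. -/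
/-- Rank bound for SVD recompression (sequence version): if `v` has nonincreasing singular
values `σ 0 ≥ … ≥ σ (r-1) > 0` and `σ k = 0` for `k ≥ r`, with norm `‖v‖² = ∑ σ k²`,
and `0 < δ < ‖v‖`, then the recompression rank
`r_δ = min { s : ∑_{k ≥ s} σ k² ≤ δ² }` satisfies `r_δ ≤ 1 + ((‖v‖² − δ²)/‖v‖²) r`. -/
theorem stmt_3 (r : ℕ) (hr : 0 < r) (σ : ℕ → ℝ) (hmono : Antitone σ)
    (hposlt : ∀ k < r, 0 < σ k) (hzero : ∀ k, r ≤ k → σ k = 0)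
    (δ : ℝ) (hδ : 0 < δ) (hδv : δ < Real.sqrt (∑ k ∈ Finset.range r, σ k ^ 2)) :
    ((sInf {s : ℕ | ∑ k ∈ Finset.Ico s r, σ k ^ 2 ≤ δ ^ 2} : ℕ) : ℝ) ≤
      1 + (((∑ k ∈ Finset.range r, σ k ^ 2) - δ ^ 2) / (∑ k ∈ Finset.range r, σ k ^ 2)) * r := by
  set N := ∑ k ∈ Finset.range r, σ k ^ 2 with hNdef
  have hσnn : ∀ k, 0 ≤ σ k := by
    intro k
    rcases lt_or_ge k r with h | h
    · exact (hposlt k h).le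
    · exact le_of_eq (hzero k h).symm
  have hδ2 : δ ^ 2 < N := (Real.lt_sqrt hδ.le).mp hδv
  have hNpos : 0 < N := lt_trans (by positivity) hδ2
  set S := {s : ℕ | ∑ k ∈ Finset.Ico s r, σ k ^ 2 ≤ δ ^ 2} with hSdef
  have hrS : r ∈ S := by
    simp only [hSdef, Set.mem_setOf_eq, Finset.Ico_self, Finset.sum_empty]
    positivity
  set m := sInf S with hmdef
  have hmr : m ≤ r := Nat.sInf_le hrS
  rcases le_or_gt m 1 with hm1 | hm1
  · have h1 : (m : ℝ) ≤ 1 := by exact_mod_cast hm1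
    have h2 : 0 ≤ ((N - δ ^ 2) / N) * r := by
      apply mul_nonneg (div_nonneg (by linarith) hNpos.le) (Nat.cast_nonneg r)
    linarith
  · -- m ≥ 2
    have hmpos : 0 < m := by omega
    set s := m - 1 with hsdef
    have hspos : 1 ≤ s := by omega
    have hsr : s ≤ r := by omega
    have hsnot : s ∉ S := Nat.notMem_of_lt_sInf (by omega)
    have htail : δ ^ 2 < ∑ k ∈ Finset.Ico s r, σ k ^ 2 := lt_of_not_ge hsnot
    set t := s - 1 with htdef
    -- tail ≤ (r - s) * σ t ^ 2
    have htail_le : ∑ k ∈ Finset.Ico s r, σ k ^ 2 ≤ (r - s : ℕ) * σ t ^ 2 := by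
      have := Finset.sum_le_card_nsmul (Finset.Ico s r) (fun k => σ k ^ 2) (σ t ^ 2)
        (fun k hk => by
          have hk' : t ≤ k := by
            have := (Finset.mem_Ico.mp hk).1; omega
          exact pow_le_pow_left₀ (hσnn k) (hmono hk') 2)
      simpa [Nat.card_Ico, nsmul_eq_mul] using this
    -- head ≥ s * σ t ^ 2
    have hhead_ge : (s : ℝ) * σ t ^ 2 ≤ ∑ k ∈ Finset.range s, σ k ^ 2 := by
      have := Finset.card_nsmul_le_sum (Finset.range s) (fun k => σ k ^ 2) (σ t ^ 2)
        (fun k hk => by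
          have hk' : k ≤ t := by
            have := Finset.mem_range.mp hk; omega
          exact pow_le_pow_left₀ (hσnn t) (hmono hk') 2)
      simpa [Finset.card_range, nsmul_eq_mul] using this
    have hsplit : (∑ k ∈ Finset.range s, σ k ^ 2) + ∑ k ∈ Finset.Ico s r, σ k ^ 2 = N := by
      simp only [hNdef, Finset.range_eq_Ico]
      exact Finset.sum_Ico_consecutive _ (Nat.zero_le s) hsr
    have hcast : ((m : ℝ) - 1) = (s : ℕ) := by
      have : m = s + 1 := by omega
      rw [this]; push_cast; ring
    rw [← sub_le_iff_le_add', div_mul_eq_mul_div, le_div_iff₀ hNpos, hcast]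
    -- goal : (s:ℝ) * N ≤ (N - δ^2) * r
    have hrs : ((r - s : ℕ) : ℝ) = (r : ℝ) - (s : ℝ) := by
      push_cast [Nat.cast_sub hsr]; ring
    rw [hrs] at htail_le
    have hsr' : (s : ℝ) ≤ (r : ℝ) := by exact_mod_cast hsr
    have hσt : 0 ≤ σ t ^ 2 := by positivity
    nlinarith [hhead_ge, htail_le, htail, hsplit, hσt, hsr',
      mul_le_mul_of_nonneg_left hhead_ge (sub_nonneg.mpr hsr'),
      mul_le_mul_of_nonneg_left htail_le (Nat.cast_nonneg s : (0:ℝ) ≤ s)]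
end

section
/- Let Φ be a ρ-Lipschitz map on a Banach space with 0 < ρ < 1 and fixed point u*, and let (S_k) be a family of 1-Lipschitz (non-expansive) maps. Assume θ = √ρ and for all 0 ≤ ℓ ≤ k, θ^ℓ ‖u* − S_{k−ℓ}(u*)‖ ≤ ‖u* − S_k(u*)‖, and assume ‖u⁰ − u*‖ ≤ (1/(1−ρ)) ‖u* − S_0(u*)‖. Define u^{k+1} = S_k(Φ(u^k)). Then ‖u^{k+1} − u*‖ ≤ (2/(1−ρ)) ‖u* − S_k(u*)‖ for all k ≥ 0. -/
/-- Convergence of the soft-thresholded fixed-point iteration: `Φ` is `ρ`-Lipschitz with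
fixed point `u*`, the maps `S k` are non-expansive, their errors at `u*` satisfy
`θ^ℓ ‖u* − S (k−ℓ) u*‖ ≤ ‖u* − S k u*‖` with `θ = √ρ`, and the initial error satisfies
`‖u⁰ − u*‖ ≤ ‖u* − S 0 u*‖/(1−ρ)`. Then for the iteration `u^{k+1} = S k (Φ (u^k))` we have
`‖u^{k+1} − u*‖ ≤ (2/(1−ρ)) ‖u* − S k u*‖` for all `k`. -/
theorem stmt_6 {X : Type*} [NormedAddCommGroup X] [NormedSpace ℝ X] [CompleteSpace X]
    (Φ : X → X) (ρ : ℝ) (hρ0 : 0 < ρ) (hρ1 : ρ < 1)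
    (hΦ : ∀ x y : X, ‖Φ x - Φ y‖ ≤ ρ * ‖x - y‖)
    (ustar : X) (hfix : Φ ustar = ustar)
    (S : ℕ → X → X) (hS : ∀ k (x y : X), ‖S k x - S k y‖ ≤ ‖x - y‖)
    (hdecay : ∀ k ℓ : ℕ, ℓ ≤ k →
      Real.sqrt ρ ^ ℓ * ‖ustar - S (k - ℓ) ustar‖ ≤ ‖ustar - S k ustar‖)
    (u : ℕ → X)
    (h0 : ‖u 0 - ustar‖ ≤ (1 / (1 - ρ)) * ‖ustar - S 0 ustar‖)
    (hrec : ∀ k, u (k + 1) = S k (Φ (u k))) :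
    ∀ k, ‖u (k + 1) - ustar‖ ≤ (2 / (1 - ρ)) * ‖ustar - S k ustar‖ := by
  have h1ρ : (0:ℝ) < 1 - ρ := by linarith
  set s := Real.sqrt ρ with hs
  have hs0 : 0 < s := Real.sqrt_pos.mpr hρ0
  have hs2 : s ^ 2 = ρ := by rw [sq]; exact Real.mul_self_sqrt hρ0.le
  have hs1 : s < 1 := by nlinarith [hs2, hs0]
  -- one step bound
  have step : ∀ k, ‖u (k + 1) - ustar‖ ≤ ρ * ‖u k - ustar‖ + ‖ustar - S k ustar‖ := by
    intro k
    have h1 : ‖u (k+1) - ustar‖ ≤ ‖S k (Φ (u k)) - S k ustar‖ + ‖S k ustar - ustar‖ := by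
      rw [hrec]
      exact norm_sub_le_norm_sub_add_norm_sub _ _ _
    have h2 : ‖S k (Φ (u k)) - S k ustar‖ ≤ ρ * ‖u k - ustar‖ := by
      calc ‖S k (Φ (u k)) - S k ustar‖ ≤ ‖Φ (u k) - ustar‖ := hS k _ _
        _ = ‖Φ (u k) - Φ ustar‖ := by rw [hfix]
        _ ≤ ρ * ‖u k - ustar‖ := hΦ _ _
    have h3 : ‖S k ustar - ustar‖ = ‖ustar - S k ustar‖ := norm_sub_rev _ _
    linarith
  intro k
  induction k with
  | zero =>
    have := step 0
    have hε0 : 0 ≤ ‖ustar - S 0 ustar‖ := norm_nonneg _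
    have : ‖u 1 - ustar‖ ≤ ρ * ((1/(1-ρ)) * ‖ustar - S 0 ustar‖) + ‖ustar - S 0 ustar‖ := by
      nlinarith [norm_nonneg (u 0 - ustar), step 0]
    have key : ρ * ((1/(1-ρ)) * ‖ustar - S 0 ustar‖) + ‖ustar - S 0 ustar‖
        = (1/(1-ρ)) * ‖ustar - S 0 ustar‖ := by field_simp; ring
    rw [key] at this
    have : (1/(1-ρ)) * ‖ustar - S 0 ustar‖ ≤ (2/(1-ρ)) * ‖ustar - S 0 ustar‖ := by
      gcongr
      norm_num
    linarith
  | succ k ih =>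
    have hd := hdecay (k+1) 1 (by omega)
    simp only [pow_one, Nat.add_sub_cancel] at hd
    -- hd : s * ‖ustar - S k ustar‖ ≤ ‖ustar - S (k+1) ustar‖
    have hεk : 0 ≤ ‖ustar - S k ustar‖ := norm_nonneg _
    have hεk1 : 0 ≤ ‖ustar - S (k+1) ustar‖ := norm_nonneg _
    have hst := step (k+1)
    -- ρ * (2/(1-ρ)) εk ≤ (2 s/(1-ρ)) ε_{k+1}, and 2s/(1-ρ) + 1 ≤ 2/(1-ρ)
    have h2 : ρ * ‖u (k+1) - ustar‖ ≤ ρ * ((2/(1-ρ)) * ‖ustar - S k ustar‖) :=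
      mul_le_mul_of_nonneg_left ih hρ0.le
    have h3 : ρ * ((2/(1-ρ)) * ‖ustar - S k ustar‖) ≤ (2*s/(1-ρ)) * ‖ustar - S (k+1) ustar‖ := by
      have hnum : ρ * (2 * ‖ustar - S k ustar‖) ≤ (2*s) * ‖ustar - S (k+1) ustar‖ := by
        nlinarith [hd, hs0.le, hεk]
      calc ρ * ((2/(1-ρ)) * ‖ustar - S k ustar‖)
          = (ρ * (2 * ‖ustar - S k ustar‖)) / (1-ρ) := by ring
        _ ≤ ((2*s) * ‖ustar - S (k+1) ustar‖) / (1-ρ) := by gcongr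
        _ = (2*s/(1-ρ)) * ‖ustar - S (k+1) ustar‖ := by ring
    have h4 : (2*s/(1-ρ)) * ‖ustar - S (k+1) ustar‖ + ‖ustar - S (k+1) ustar‖
        ≤ (2/(1-ρ)) * ‖ustar - S (k+1) ustar‖ := by
      have : 2*s/(1-ρ) + 1 ≤ 2/(1-ρ) := by
        rw [div_add' _ _ _ h1ρ.ne', div_le_div_iff₀ h1ρ h1ρ]
        nlinarith [sq_nonneg (1 - s)]
      nlinarith [this, hεk1]
    linarith
end

section
/- Suppose the best-approximation ranks of v satisfy rank(R_ε(v)) ≤ C ε^{−1/s} for all ε ∈ (0, ‖v‖], where R_ε is SVD truncation to accuracy ε and C, s > 0. Then there exists C_s > 0 (depending only on C and s) such that for every ε ∈ (0, ‖v‖], if α > 0 is chosen with ‖v − S_α(v)‖ = ε, then ε²/α² ≤ C_s ε^{−1/s}. -/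
/-- Quasi-optimality of the soft-thresholding surrogate rank under algebraic decay
(sequence version): there is a constant `Cs` depending only on `C` and `s` such that
for every nonincreasing nonnegative ℓ² sequence `σ` whose best approximation ranks
satisfy `min{r : ∑_{k ≥ r} σₖ² ≤ ε²} ≤ C ε^{−1/s}` for all `ε ∈ (0, ‖v‖]`, and for
every such `ε` and every `α > 0` with `∑ₖ min(σₖ, α)² = ε²`, one has
`ε²/α² ≤ Cs ε^{−1/s}`. -/
theorem stmt_17 (C s : ℝ) (hC : 0 < C) (hs : 0 < s) :
    ∃ Cs : ℝ, 0 < Cs ∧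
      ∀ σ : ℕ → ℝ, Antitone σ → (∀ k, 0 ≤ σ k) → Summable (fun k => σ k ^ 2) →
        (∀ ε : ℝ, 0 < ε → ε ≤ Real.sqrt (∑' k, σ k ^ 2) →
          ((sInf {r : ℕ | ∑' k, (if r ≤ k then σ k ^ 2 else 0) ≤ ε ^ 2} : ℕ) : ℝ)
            ≤ C * ε ^ (-(1 / s))) →
        ∀ ε α : ℝ, 0 < ε → ε ≤ Real.sqrt (∑' k, σ k ^ 2) → 0 < α →
          (∑' k, min (σ k) α ^ 2) = ε ^ 2 →
          ε ^ 2 / α ^ 2 ≤ Cs * ε ^ (-(1 / s)) := by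
  have hsqrt2 : (1 : ℝ) < Real.sqrt 2 := by
    have := Real.sqrt_lt_sqrt (by norm_num : (0:ℝ) ≤ 1) (by norm_num : (1:ℝ) < 2)
    simpa using this
  have hsqrt2pos : (0 : ℝ) < Real.sqrt 2 := by positivity
  refine ⟨2 * C * Real.sqrt 2 ^ (1 / s), by positivity, ?_⟩
  intro σ hmono hpos hsum H ε α hε hεle hα hαε
  set ε' := ε / Real.sqrt 2 with hε'def
  have hε' : 0 < ε' := div_pos hε hsqrt2pos
  have hε'le : ε' ≤ Real.sqrt (∑' k, σ k ^ 2) :=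
    le_trans (div_le_self hε.le hsqrt2.le) hεle
  have hε'sq : ε' ^ 2 = ε ^ 2 / 2 := by
    rw [hε'def, div_pow, Real.sq_sqrt (by norm_num : (0:ℝ) ≤ 2)]
  -- tail rewriting
  have htail : ∀ n : ℕ, (∑' k, (if n ≤ k then σ k ^ 2 else 0)) = ∑' k, σ (k + n) ^ 2 := by
    intro n
    have hinj : Function.Injective (fun k : ℕ => k + n) := add_left_injective n
    have h0 : ∀ x ∉ Set.range (fun k : ℕ => k + n),
        (if n ≤ x then σ x ^ 2 else 0) = 0 := by
      intro x hx
      have hnx : ¬ n ≤ x := by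
        intro hle
        exact hx ⟨x - n, by simpa using Nat.sub_add_cancel hle⟩
      simp [hnx]
    have := Function.Injective.tsum_eq (f := fun x => if n ≤ x then σ x ^ 2 else 0) hinj
      (Function.support_subset_iff'.mpr h0)
    rw [← this]
    refine tsum_congr fun k => ?_
    simp [Nat.le_add_left]
  -- nonemptiness of rank set for ε'
  have hSne : {r : ℕ | ∑' k, (if r ≤ k then σ k ^ 2 else 0) ≤ ε' ^ 2}.Nonempty := by
    have htend : Filter.Tendsto (fun n => ∑' k, σ (k + n) ^ 2) Filter.atTop (nhds 0) :=
      tendsto_sum_nat_add (fun k => σ k ^ 2)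
    have hev : ∀ᶠ n in Filter.atTop, (∑' k, σ (k + n) ^ 2) ≤ ε' ^ 2 :=
      htend.eventually (eventually_le_nhds (by positivity))
    obtain ⟨n, hn⟩ := hev.exists
    exact ⟨n, by simpa [htail n] using hn⟩
  have hrmem0 : sInf {r : ℕ | ∑' k, (if r ≤ k then σ k ^ 2 else 0) ≤ ε' ^ 2}
      ∈ {r : ℕ | ∑' k, (if r ≤ k then σ k ^ 2 else 0) ≤ ε' ^ 2} := Nat.sInf_mem hSne
  have hrC0 : ((sInf {r : ℕ | ∑' k, (if r ≤ k then σ k ^ 2 else 0) ≤ ε' ^ 2} : ℕ) : ℝ)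
      ≤ C * ε' ^ (-(1 / s)) := H ε' hε' hε'le
  obtain ⟨r, hr⟩ : ∃ r, sInf {r : ℕ | ∑' k, (if r ≤ k then σ k ^ 2 else 0) ≤ ε' ^ 2} = r :=
    ⟨_, rfl⟩
  rw [hr] at hrmem0 hrC0
  have hrmem : (∑' k, σ (k + r) ^ 2) ≤ ε' ^ 2 := by
    have := hrmem0
    rwa [Set.mem_setOf_eq, htail r] at this
  -- summability of min terms
  have hminle : ∀ k, min (σ k) α ^ 2 ≤ σ k ^ 2 := fun k =>
    pow_le_pow_left₀ (le_min (hpos k) hα.le) (min_le_left _ _) 2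
  have hmin : Summable (fun k => min (σ k) α ^ 2) :=
    Summable.of_nonneg_of_le (fun k => sq_nonneg _) hminle hsum
  -- key bound : ε² ≤ r α² + ε'²
  have key : ε ^ 2 ≤ (r : ℝ) * α ^ 2 + ε' ^ 2 := by
    rw [← hαε, ← Summable.sum_add_tsum_nat_add r hmin]
    have h1 : ∑ k ∈ Finset.range r, min (σ k) α ^ 2 ≤ (r : ℝ) * α ^ 2 := by
      calc ∑ k ∈ Finset.range r, min (σ k) α ^ 2
          ≤ ∑ _k ∈ Finset.range r, α ^ 2 :=
            Finset.sum_le_sum fun k _ =>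
              pow_le_pow_left₀ (le_min (hpos k) hα.le) (min_le_right _ _) 2
        _ = (r : ℝ) * α ^ 2 := by rw [Finset.sum_const, Finset.card_range, nsmul_eq_mul]
    have h2 : (∑' k, min (σ (k + r)) α ^ 2) ≤ ε' ^ 2 :=
      le_trans (Summable.tsum_le_tsum (fun k => hminle (k + r))
        ((summable_nat_add_iff (f := fun n => min (σ n) α ^ 2) r).mpr hmin)
        ((summable_nat_add_iff (f := fun n => σ n ^ 2) r).mpr hsum)) hrmem
    linarith
  -- conclude
  have hrw : ε' ^ (-(1 / s)) = ε ^ (-(1 / s)) * Real.sqrt 2 ^ (1 / s) := by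
    rw [hε'def, Real.div_rpow hε.le hsqrt2pos.le, Real.rpow_neg hsqrt2pos.le]
    field_simp
  have hαsq : (0 : ℝ) < α ^ 2 := by positivity
  rw [div_le_iff₀ hαsq]
  have h2r : ε ^ 2 ≤ 2 * (r : ℝ) * α ^ 2 := by
    rw [hε'sq] at key; linarith
  calc ε ^ 2 ≤ 2 * (r : ℝ) * α ^ 2 := h2r
    _ ≤ 2 * (C * ε' ^ (-(1 / s))) * α ^ 2 := by
        have h := mul_le_mul_of_nonneg_right
          (by linarith : 2 * (r : ℝ) ≤ 2 * (C * ε' ^ (-(1 / s)))) hαsq.le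
        linarith
    _ = 2 * C * Real.sqrt 2 ^ (1 / s) * ε ^ (-(1 / s)) * α ^ 2 := by
        rw [hrw]; ring
end

section
/- Let p(t) be a polynomial of degree at most J with values in a complex Hilbert space H, let (t_j, ω_j)_{j=1}^J be the Gauss–Legendre nodes and weights on [0,h], and suppose that at each node Re⟨p'(t_j), p(t_j)⟩ = 0. Then ‖p(h)‖ = ‖p(0)‖. -/
open scoped ComplexInnerProductSpace in
/-- Isometry preservation of Gauss collocation: let `p : ℝ → H` be a polynomial of degree
at most `J` with values in a complex Hilbert space, with derivative `p'`, and let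
`(t j, ω j)` be the Gauss–Legendre nodes and weights on `[0,h]` (characterized by
exactness on polynomials of degree `≤ 2J−1`). If `Re⟪p'(t j), p(t j)⟫ = 0` at every
node, then `‖p(h)‖ = ‖p(0)‖`. -/
theorem stmt_18 {H : Type*} [NormedAddCommGroup H] [InnerProductSpace ℂ H] [CompleteSpace H]
    (J : ℕ) (hJ : 0 < J) (h : ℝ) (hh : 0 < h)
    (t : Fin J → ℝ) (ht : StrictMono t) (htmem : ∀ j, t j ∈ Set.Icc (0 : ℝ) h)
    (ω : Fin J → ℝ)
    (hexact : ∀ q : Polynomial ℝ, q.natDegree ≤ 2 * J - 1 →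
      ∑ j, ω j * q.eval (t j) = ∫ s in (0 : ℝ)..h, q.eval s)
    (p p' : ℝ → H) (c : Fin (J + 1) → H)
    (hpoly : ∀ s : ℝ, p s = ∑ i : Fin (J + 1), (s ^ (i : ℕ)) • c i)
    (hderiv : ∀ s : ℝ, HasDerivAt p (p' s) s)
    (hnode : ∀ j, (⟪p' (t j), p (t j)⟫ : ℂ).re = 0) :
    ‖p h‖ = ‖p 0‖ := by
  classical
  set Q : Polynomial ℝ :=
    ∑ i : Fin (J + 1), ∑ k : Fin (J + 1),
      Polynomial.C ((⟪c i, c k⟫ : ℂ).re) * Polynomial.X ^ ((i : ℕ) + k) with hQ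
  -- Q.eval s = ‖p s‖ ^ 2
  have hQeval : ∀ s : ℝ, Q.eval s = ‖p s‖ ^ 2 := by
    intro s
    rw [← inner_self_eq_norm_sq (𝕜 := ℂ), hpoly]
    rw [sum_inner]
    simp only [hQ, Polynomial.eval_finset_sum, Polynomial.eval_mul, Polynomial.eval_C,
      Polynomial.eval_pow, Polynomial.eval_X, inner_sum, map_sum]
    refine Finset.sum_congr rfl fun i _ => Finset.sum_congr rfl fun k _ => ?_
    rw [RCLike.real_smul_eq_coe_smul (K := ℂ), RCLike.real_smul_eq_coe_smul (K := ℂ) (x := c k),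
      inner_smul_left, inner_smul_right, RCLike.conj_ofReal, ← mul_assoc, ← RCLike.ofReal_mul,
      RCLike.re_ofReal_mul, ← pow_add]
    exact mul_comm _ _
  -- derivative of ‖p s‖^2 is 2 * re ⟪p' s, p s⟫
  have hQd : ∀ s : ℝ, Q.derivative.eval s = 2 * (⟪p' s, p s⟫ : ℂ).re := by
    intro s
    have h1 : HasDerivAt (fun u => Q.eval u) (Q.derivative.eval s) s := Q.hasDerivAt s
    have h2 : HasDerivAt (fun u : ℝ => (⟪p u, p u⟫ : ℂ)) (⟪p s, p' s⟫ + ⟪p' s, p s⟫) s :=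
      (hderiv s).inner ℂ (hderiv s)
    have h3 : HasDerivAt (fun u : ℝ => ((⟪p u, p u⟫ : ℂ)).re)
        ((⟪p s, p' s⟫ + ⟪p' s, p s⟫ : ℂ).re) s :=
      Complex.reCLM.hasFDerivAt.comp_hasDerivAt s h2
    have h4 : HasDerivAt (fun u => Q.eval u) ((⟪p s, p' s⟫ + ⟪p' s, p s⟫ : ℂ).re) s := by
      refine h3.congr_of_eventuallyEq ?_
      filter_upwards with u
      rw [hQeval, ← inner_self_eq_norm_sq (𝕜 := ℂ)]
      rfl
    have hsymm : (⟪p s, p' s⟫ : ℂ).re = (⟪p' s, p s⟫ : ℂ).re := by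
      rw [← inner_conj_symm (p' s), Complex.conj_re]
    rw [h1.unique h4, Complex.add_re, hsymm]
    ring
  -- degree bound
  have hdeg : Q.derivative.natDegree ≤ 2 * J - 1 := by
    have h1 : Q.natDegree ≤ 2 * J := by
      refine Polynomial.natDegree_sum_le_of_forall_le _ _ fun i _ => ?_
      refine Polynomial.natDegree_sum_le_of_forall_le _ _ fun k _ => ?_
      refine le_trans (Polynomial.natDegree_C_mul_le _ _) ?_
      rw [Polynomial.natDegree_X_pow]
      omega
    calc Q.derivative.natDegree ≤ Q.natDegree - 1 := Polynomial.natDegree_derivative_le Q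
    _ ≤ 2 * J - 1 := by omega
  -- Gauss quadrature
  have hsum : ∑ j, ω j * Q.derivative.eval (t j) = 0 := by
    refine Finset.sum_eq_zero fun j _ => ?_
    rw [hQd, hnode j]; ring
  have hint : (∫ s in (0 : ℝ)..h, Q.derivative.eval s) = Q.eval h - Q.eval 0 := by
    refine intervalIntegral.integral_deriv_eq_sub' _ ?_ (fun x _ => Q.differentiableAt) ?_
    · funext x; exact (Q.hasDerivAt x).deriv
    · exact (Polynomial.continuous _).continuousOn
  have := (hexact Q.derivative hdeg).trans hint
  rw [hsum] at this
  have hsq : ‖p h‖ ^ 2 = ‖p 0‖ ^ 2 := by rw [← hQeval, ← hQeval]; linarith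
  nlinarith [norm_nonneg (p h), norm_nonneg (p 0)]
end

section
/- For v in a Hilbert tensor product space and ε > 0, the SVD truncation R_ε(v) (truncation to the minimal rank r_ε with tail ∑_{k > r_ε} σ_k² ≤ ε²) is a minimizer of rank over the ball {w : ‖v − w‖ ≤ ε}: for every w with ‖v − w‖ ≤ ε, rank(w) ≥ rank(R_ε(v)). -/
/-
If `w` has rank `d`, then for every `n` the space `U = span {e₀, …, e_{n-1}}` contains an
orthonormal family `u₁, …, u_N` with `N ≥ n - d` on which `w` vanishes. Along it `v - w = v`, so
the Hilbert–Schmidt error `∑ᵢ ‖(v - w) bᵢ‖²`, which does not depend on the orthonormal basis and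
dominates the sum over any orthonormal family, is at least `∑ⱼ ‖v uⱼ‖² = ∑_{k<n} σₖ² pₖ` with
weights `pₖ = ∑ⱼ |⟪eₖ, uⱼ⟫|² ∈ [0, 1]` of total mass `N`. As `σ` is nonincreasing, such a sum is
at least the tail `∑_{d ≤ k < n} σₖ²`. Letting `n → ∞`, the error is at least the full tail from
`d`, so an error `≤ ε` forces `d ≥ r_ε` by minimality of `r_ε`.
-/

open Finset Module
open scoped InnerProductSpace InnerProduct

theorem Antitone.sum_range_ite_le_sum_mul {a p : ℕ → ℝ} (ha : Antitone a) (ha0 : ∀ k, 0 ≤ a k)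
    (hp0 : ∀ k, 0 ≤ p k) (hp1 : ∀ k, p k ≤ 1) {d n : ℕ}
    (hmass : ((n - d : ℕ) : ℝ) ≤ ∑ k ∈ range n, p k) :
    ∑ k ∈ range n, (if d ≤ k then a k else 0) ≤ ∑ k ∈ range n, a k * p k := by
  set c : ℕ → ℝ := fun k => if d ≤ k then 1 else 0
  have hc : ∑ k ∈ range n, c k = ((n - d : ℕ) : ℝ) := by
    rw [sum_boole, ← Nat.card_Ico d n]
    congr 2
    ext k
    simp only [mem_filter, mem_range, mem_Ico]
    omega
  -- `a k - a d` and `p k - c k` have the same sign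
  have hterm : ∀ k, 0 ≤ (a k - a d) * (p k - c k) := by
    intro k
    by_cases hk : d ≤ k
    · simp only [c, if_pos hk]
      exact mul_nonneg_of_nonpos_of_nonpos (by linarith [ha hk]) (by linarith [hp1 k])
    · simp only [c, if_neg hk]
      exact mul_nonneg (by linarith [ha (not_le.1 hk).le]) (by linarith [hp0 k])
  have hexpand : ∀ k, (a k - a d) * (p k - c k)
      = a k * p k - (if d ≤ k then a k else 0) - a d * (p k - c k) := by
    intro k
    simp only [c]
    split_ifs <;> ring
  have hsum := sum_nonneg fun k (_ : k ∈ range n) => hterm k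
  rw [sum_congr rfl fun k _ => hexpand k, sum_sub_distrib, sum_sub_distrib, ← mul_sum,
    sum_sub_distrib, hc] at hsum
  nlinarith [mul_nonneg (ha0 d) (sub_nonneg.2 hmass)]

theorem tsum_ite_le_eq_tsum_add {α : Type*} [AddCommMonoid α] [TopologicalSpace α]
    (a : ℕ → α) (r : ℕ) : ∑' k, (if r ≤ k then a k else 0) = ∑' k, a (k + r) := by
  rw [← (add_left_injective r).tsum_eq]
  · simp
  · intro k hk
    have : r ≤ k := by by_contra h; simp [h] at hk
    exact ⟨k - r, Nat.sub_add_cancel this⟩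

section InnerProductSpace

variable {𝕜 E F : Type*} [RCLike 𝕜] [NormedAddCommGroup E] [InnerProductSpace 𝕜 E]
  [NormedAddCommGroup F] [InnerProductSpace 𝕜 F]

theorem HilbertBasis.tsum_enorm_inner_sq {ι : Type*} (b : HilbertBasis ι 𝕜 E) (x : E) :
    ∑' i, ‖⟪b i, x⟫_𝕜‖ₑ ^ 2 = ‖x‖ₑ ^ 2 := by
  have h : HasSum (fun i => ‖⟪b i, x⟫_𝕜‖ ^ 2) (‖x‖ ^ 2) := by
    simpa only [RCLike.reCLM_apply, inner_mul_symm_re_eq_norm, norm_mul, norm_inner_symm x,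
      ← sq, inner_self_eq_norm_sq] using RCLike.reCLM.hasSum (b.hasSum_inner_mul_inner x x)
  simp only [← ofReal_norm, ← ENNReal.ofReal_pow (norm_nonneg _)]
  rw [← ENNReal.ofReal_tsum_of_nonneg (fun i => by positivity) h.summable, h.tsum_eq]

theorem Orthonormal.sum_enorm_inner_sq_le {κ : Type*} [Fintype κ] {u : κ → E}
    (hu : Orthonormal 𝕜 u) (x : E) : ∑ j, ‖⟪u j, x⟫_𝕜‖ₑ ^ 2 ≤ ‖x‖ₑ ^ 2 := by
  simp only [← ofReal_norm, ← ENNReal.ofReal_pow (norm_nonneg _)]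
  rw [← ENNReal.ofReal_sum_of_nonneg fun j _ => by positivity]
  exact ENNReal.ofReal_le_ofReal (hu.sum_inner_products_le x)

theorem HilbertBasis.sum_enorm_apply_sq_le_tsum [CompleteSpace E] [CompleteSpace F]
    {ι κ : Type*} [Fintype κ] (b : HilbertBasis ι 𝕜 E) (T : E →L[𝕜] F) {u : κ → E}
    (hu : Orthonormal 𝕜 u) : ∑ j, ‖T (u j)‖ₑ ^ 2 ≤ ∑' i, ‖T (b i)‖ₑ ^ 2 := by
  -- expanding in a Hilbert basis `c` of `F` turns both sides into sums over `c` for `T†`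
  obtain ⟨_, c, -⟩ := exists_hilbertBasis 𝕜 F
  have hT : ∀ x l, ‖⟪c l, T x⟫_𝕜‖ₑ = ‖⟪x, (T†) (c l)⟫_𝕜‖ₑ := fun x l => by
    rw [← ContinuousLinearMap.adjoint_inner_left, ← ofReal_norm, norm_inner_symm, ofReal_norm]
  calc ∑ j, ‖T (u j)‖ₑ ^ 2 = ∑' l, ∑ j, ‖⟪u j, (T†) (c l)⟫_𝕜‖ₑ ^ 2 := by
        simp_rw [← c.tsum_enorm_inner_sq, hT]
        exact (Summable.tsum_finsetSum fun j _ => ENNReal.summable).symm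
    _ ≤ ∑' l, ‖(T†) (c l)‖ₑ ^ 2 := ENNReal.tsum_le_tsum fun l => hu.sum_enorm_inner_sq_le _
    _ = ∑' i, ‖T (b i)‖ₑ ^ 2 := by
        simp_rw [← b.tsum_enorm_inner_sq, ← hT]
        rw [ENNReal.tsum_comm]
        simp_rw [c.tsum_enorm_inner_sq]

theorem HilbertBasis.sum_norm_apply_sq_le_tsum [CompleteSpace E] [CompleteSpace F]
    {ι κ : Type*} [Fintype κ] (b : HilbertBasis ι 𝕜 E) (T : E →L[𝕜] F) {u : κ → E}
    (hu : Orthonormal 𝕜 u) (hT : Summable fun i => ‖T (b i)‖ ^ 2) :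
    ∑ j, ‖T (u j)‖ ^ 2 ≤ ∑' i, ‖T (b i)‖ ^ 2 := by
  rw [← ENNReal.ofReal_le_ofReal_iff (tsum_nonneg fun i => by positivity),
    ENNReal.ofReal_sum_of_nonneg fun j _ => by positivity,
    ENNReal.ofReal_tsum_of_nonneg (fun i => by positivity) hT]
  simpa only [ENNReal.ofReal_pow (norm_nonneg _), ofReal_norm]
    using b.sum_enorm_apply_sq_le_tsum T hu

theorem Submodule.exists_orthonormal_mem_inf_ker {M : Type*} [AddCommGroup M] [Module 𝕜 M]
    (U : Submodule 𝕜 E) [FiniteDimensional 𝕜 U] (w : E →ₗ[𝕜] M)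
    [FiniteDimensional 𝕜 (LinearMap.range w)] :
    ∃ (N : ℕ) (u : Fin N → E), Orthonormal 𝕜 u ∧ (∀ j, u j ∈ U) ∧ (∀ j, w (u j) = 0) ∧
      finrank 𝕜 U ≤ N + finrank 𝕜 (LinearMap.range w) := by
  set W := w.domRestrict U
  let ob := stdOrthonormalBasis 𝕜 (LinearMap.ker W)
  refine ⟨_, fun j => ((ob j : U) : E),
    (ob.orthonormal.comp_linearIsometry (LinearMap.ker W).subtypeₗᵢ).comp_linearIsometry
      U.subtypeₗᵢ, fun j => (ob j : U).2, fun j => (ob j).2, ?_⟩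
  have hrange : LinearMap.range W ≤ LinearMap.range w := by
    rintro _ ⟨y, rfl⟩
    exact ⟨y, rfl⟩
  have := Submodule.finrank_mono hrange
  have := W.finrank_range_add_finrank_ker
  omega

theorem Orthonormal.inner_eq_zero_of_mem_span_image {ι : Type*} {e : ι → E}
    (he : Orthonormal 𝕜 e) {s : Set ι} {k : ι} (hk : k ∉ s) {x : E}
    (hx : x ∈ Submodule.span 𝕜 (e '' s)) : ⟪e k, x⟫_𝕜 = 0 := by
  have : Submodule.span 𝕜 (e '' s) ≤ LinearMap.ker (innerₛₗ 𝕜 (e k)) := by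
    rw [Submodule.span_le]
    rintro _ ⟨j, hj, rfl⟩
    exact he.inner_eq_zero (ne_of_mem_of_not_mem hj hk).symm
  exact this hx

theorem Orthonormal.sum_sq_norm_inner_of_mem_span_image {ι : Type*} {e : ι → E}
    (he : Orthonormal 𝕜 e) {s : Finset ι} {x : E} (hx : x ∈ Submodule.span 𝕜 (e '' s)) :
    ∑ k ∈ s, ‖⟪e k, x⟫_𝕜‖ ^ 2 = ‖x‖ ^ 2 := by
  classical
  rw [← coe_image] at hx
  have := (OrthonormalBasis.span he s).sum_sq_norm_inner_right ⟨x, hx⟩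
  simpa [← Finset.sum_coe_sort s] using this

theorem norm_sq_apply_eq_sum_of_inner_eq_zero {ι : Type*} {v : E → F} {σ : ι → ℝ} {e : ι → E}
    {f : ι → F} (hf : Orthonormal 𝕜 f) (hv : ∀ x, v x = ∑' k, (σ k : 𝕜) • (⟪e k, x⟫_𝕜 • f k))
    {s : Finset ι} {x : E} (hx : ∀ k ∉ s, ⟪e k, x⟫_𝕜 = 0) :
    ‖v x‖ ^ 2 = ∑ k ∈ s, σ k ^ 2 * ‖⟪e k, x⟫_𝕜‖ ^ 2 := by
  have hvx : v x = ∑ k ∈ s, ((σ k : 𝕜) * ⟪e k, x⟫_𝕜) • f k := by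
    rw [hv, tsum_eq_sum fun k hk => by rw [hx k hk, zero_smul, smul_zero]]
    simp_rw [smul_smul]
  have := hf.orthogonalFamily.norm_sum (fun k => (σ k : 𝕜) * ⟪e k, x⟫_𝕜) s
  simpa [hvx, norm_mul, mul_pow] using this

theorem sum_range_ite_sq_le_tsum_norm_sub_sq [CompleteSpace E] [CompleteSpace F]
    {v w : E →L[𝕜] F} {σ : ℕ → ℝ} {e : ℕ → E} {f : ℕ → F}
    (he : Orthonormal 𝕜 e) (hf : Orthonormal 𝕜 f) (hσ : Antitone σ) (hσ0 : ∀ k, 0 ≤ σ k)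
    (hv : ∀ x, v x = ∑' k, (σ k : 𝕜) • (⟪e k, x⟫_𝕜 • f k))
    [FiniteDimensional 𝕜 (LinearMap.range (w : E →ₗ[𝕜] F))]
    {ι : Type*} (b : HilbertBasis ι 𝕜 E) (hvw : Summable fun i => ‖v (b i) - w (b i)‖ ^ 2)
    (n : ℕ) :
    ∑ k ∈ range n, (if finrank 𝕜 (LinearMap.range (w : E →ₗ[𝕜] F)) ≤ k then σ k ^ 2 else 0)
      ≤ ∑' i, ‖v (b i) - w (b i)‖ ^ 2 := by
  classical
  set d := finrank 𝕜 (LinearMap.range (w : E →ₗ[𝕜] F))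
  set U := Submodule.span 𝕜 (e '' (range n : Set ℕ))
  have : FiniteDimensional 𝕜 U := .span_of_finite 𝕜 ((range n).finite_toSet.image e)
  have hUn : finrank 𝕜 U = n := by
    rw [finrank_eq_card_basis ((OrthonormalBasis.span he (range n)).toBasis.map
      (LinearEquiv.ofEq _ _ (by rw [coe_image])))]
    simp
  obtain ⟨N, u, hu, huU, huw, hN⟩ := U.exists_orthonormal_mem_inf_ker (w : E →ₗ[𝕜] F)
  set p : ℕ → ℝ := fun k => ∑ j, ‖⟪e k, u j⟫_𝕜‖ ^ 2
  have hp1 : ∀ k, p k ≤ 1 := fun k => by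
    simpa only [norm_inner_symm, he.1 k, one_pow] using hu.sum_inner_products_le (e k)
  have hmass : ((n - d : ℕ) : ℝ) ≤ ∑ k ∈ range n, p k := by
    rw [sum_comm]
    simp_rw [he.sum_sq_norm_inner_of_mem_span_image (huU _), hu.1, one_pow, sum_const,
      card_univ, Fintype.card_fin, nsmul_eq_mul, mul_one]
    exact_mod_cast (by omega : n - d ≤ N)
  have hσsq : Antitone fun k => σ k ^ 2 := fun i j hij => pow_le_pow_left₀ (hσ0 j) (hσ hij) 2
  calc _ ≤ ∑ k ∈ range n, σ k ^ 2 * p k :=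
        hσsq.sum_range_ite_le_sum_mul (fun k => by positivity) (fun k => by positivity) hp1 hmass
    _ = ∑ j, ‖v (u j)‖ ^ 2 := by
        simp_rw [p, mul_sum]
        rw [sum_comm]
        simp_rw [norm_sq_apply_eq_sum_of_inner_eq_zero hf hv
          fun k hk => he.inner_eq_zero_of_mem_span_image hk (huU _)]
    _ = ∑ j, ‖(v - w) (u j)‖ ^ 2 := sum_congr rfl fun j _ => by
        rw [sub_apply, show w (u j) = 0 from huw j, sub_zero]
    _ ≤ ∑' i, ‖(v - w) (b i)‖ ^ 2 := b.sum_norm_apply_sq_le_tsum (v - w) hu hvw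

end InnerProductSpace

open scoped ComplexInnerProductSpace in
theorem stmt_19_general {E F : Type*}
    [NormedAddCommGroup E] [InnerProductSpace ℂ E] [CompleteSpace E]
    [NormedAddCommGroup F] [InnerProductSpace ℂ F] [CompleteSpace F]
    (v : E →L[ℂ] F) (σ : ℕ → ℝ) (e : ℕ → E) (f : ℕ → F)
    (he : Orthonormal ℂ e) (hf : Orthonormal ℂ f)
    (hσ : Antitone σ) (hσ0 : ∀ k, 0 ≤ σ k)
    (hv : ∀ x, v x = ∑' k, (σ k : ℂ) • (⟪e k, x⟫ • f k))
    (ε : ℝ) (hε : 0 < ε)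
    (rε : ℕ) (hrε : rε = sInf {r : ℕ | ∑' k, (if r ≤ k then σ k ^ 2 else 0) ≤ ε ^ 2})
    {ι : Type*} (b : HilbertBasis ι ℂ E) :
    (∑' k, (if rε ≤ k then σ k ^ 2 else 0)) ≤ ε ^ 2 ∧
      ∀ w : E →L[ℂ] F, Summable (fun i => ‖v (b i) - w (b i)‖ ^ 2) →
        (∑' i, ‖v (b i) - w (b i)‖ ^ 2) ≤ ε ^ 2 →
        (rε : Cardinal) ≤ Module.rank ℂ (LinearMap.range (w : E →ₗ[ℂ] F)) := by
  have htail : ∃ r, ∑' k, (if r ≤ k then σ k ^ 2 else 0) ≤ ε ^ 2 := by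
    simp_rw [tsum_ite_le_eq_tsum_add]
    exact ((tendsto_sum_nat_add fun k => σ k ^ 2).eventually
      (ge_mem_nhds (by positivity : (0 : ℝ) < ε ^ 2))).exists
  refine ⟨hrε ▸ Nat.sInf_mem htail, fun w hvw hle => ?_⟩
  by_contra! hlt
  have : FiniteDimensional ℂ (LinearMap.range (w : E →ₗ[ℂ] F)) :=
    Module.rank_lt_aleph0_iff.1 (hlt.trans Cardinal.natCast_lt_aleph0)
  rw [← finrank_eq_rank, Nat.cast_lt] at hlt
  refine hlt.not_ge (hrε ▸ Nat.sInf_le ?_)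
  exact (Real.tsum_le_of_sum_range_le (fun k => by positivity)
    (sum_range_ite_sq_le_tsum_norm_sub_sq he hf hσ hσ0 hv b hvw)).trans hle

open scoped ComplexInnerProductSpace in
/-- Rank-minimization optimality of SVD truncation: let `v : E →L[ℂ] F` have a singular
value decomposition with nonincreasing nonnegative singular values `σ`, let `ε > 0`, and
let `rε = min{r : ∑_{k ≥ r} σₖ² ≤ ε²}` be the truncation rank. Then the truncation error
is at most `ε`, and every `w` within Hilbert–Schmidt distance `ε` of `v` (distances
computed in any Hilbert basis `b` of `E`) has rank at least `rε`. -/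
theorem stmt_19 {E F : Type*}
    [NormedAddCommGroup E] [InnerProductSpace ℂ E] [CompleteSpace E]
    [NormedAddCommGroup F] [InnerProductSpace ℂ F] [CompleteSpace F]
    (v : E →L[ℂ] F) (σ : ℕ → ℝ) (e : ℕ → E) (f : ℕ → F)
    (he : Orthonormal ℂ e) (hf : Orthonormal ℂ f)
    (hσ : Antitone σ) (hσ0 : ∀ k, 0 ≤ σ k) (hσ2 : Summable (fun k => σ k ^ 2))
    (hv : ∀ x, v x = ∑' k, (σ k : ℂ) • (⟪e k, x⟫ • f k))
    (ε : ℝ) (hε : 0 < ε)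
    (rε : ℕ) (hrε : rε = sInf {r : ℕ | ∑' k, (if r ≤ k then σ k ^ 2 else 0) ≤ ε ^ 2})
    {ι : Type*} (b : HilbertBasis ι ℂ E) :
    (∑' k, (if rε ≤ k then σ k ^ 2 else 0)) ≤ ε ^ 2 ∧
      ∀ w : E →L[ℂ] F, Summable (fun i => ‖v (b i) - w (b i)‖ ^ 2) →
        (∑' i, ‖v (b i) - w (b i)‖ ^ 2) ≤ ε ^ 2 →
        (rε : Cardinal) ≤ Module.rank ℂ (LinearMap.range (w : E →ₗ[ℂ] F)) :=
  stmt_19_general v σ e f he hf hσ hσ0 hv ε hε rε hrε b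
end
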